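/- Let α,β₁,β₂,β₃,ε ∈ ℝ and let (x₁,x₂,x₃,x̃₁,x̃₂,x̃₃) ∈ ℝ⁶ satisfy the dZV equations with (α₁,α₂,α₃) = (α,−α,0): x̃₁ − x₁ = εα(x̃₂x₃ + x₂x̃₃) + εβ₃(x̃₂ + x₂) − εβ₂(x̃₃ + x₃), x̃₂ − x₂ = −εα(x̃₃x₁ + x₃x̃₁) + εβ₁(x̃₃ + x₃) − εβ₃(x̃₁ + x₁), x̃₃ − x₃ = εβ₂(x̃₁ + x₁) − εβ₁(x̃₂ + x₂). Then the polynomial H = −αx₃² − 2(β₁x₁ + β₂x₂ + β₃x₃) + ε²α(β₂x₁ − β₁x₂)² is a conserved quantity: H(x̃₁,x̃₂,x̃₃) = H(x₁,x₂,x₃). -/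
import Mathlib


/-- Polynomial conserved quantity of the Hirota–Kimura discretization of the
Zhukovski–Volterra gyrostat with `(α₁,α₂,α₃) = (α,−α,0)`. -/
theorem dZV_alpha_minus_alpha_zero_integral (α b1 b2 b3 ε x1 x2 x3 xt1 xt2 xt3 : ℝ)
    (h1 : xt1 - x1 = ε * α * (xt2 * x3 + x2 * xt3) + ε * b3 * (xt2 + x2)
          - ε * b2 * (xt3 + x3))
    (h2 : xt2 - x2 = -(ε * α * (xt3 * x1 + x3 * xt1)) + ε * b1 * (xt3 + x3)
          - ε * b3 * (xt1 + x1))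
    (h3 : xt3 - x3 = ε * b2 * (xt1 + x1) - ε * b1 * (xt2 + x2)) :
    -α * xt3 ^ 2 - 2 * (b1 * xt1 + b2 * xt2 + b3 * xt3)
        + ε ^ 2 * α * (b2 * xt1 - b1 * xt2) ^ 2
      = -α * x3 ^ 2 - 2 * (b1 * x1 + b2 * x2 + b3 * x3)
        + ε ^ 2 * α * (b2 * x1 - b1 * x2) ^ 2 := by
  linear_combination (-2*b1) * h1 + (-2*b2) * h2
    + (-α*(xt3+x3) - 2*b3 - ε*α*(b2*(xt1-x1)-b1*(xt2-x2))) * h3
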